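/- arXiv:0902.3592 — 4 statements merged into one kernel-verified Lean document; each statement's English description precedes it below -/
import Mathlib

section
/- Let D be an integral domain and a, b nonzero elements of D. Then D is a v-domain if and only if for all nonzero a, b ∈ D the ideal aD ∩ bD is v-invertible. -/
/-!
Everything rests on `(Aᵛ B)⁻¹ = (A B)⁻¹`: it makes `v`-invertibility stable under products,
under passing to a factor of a product, and under `A ↦ A⁻¹`. Since `aD ∩ bD = ab (aD + bD)⁻¹`,
the condition on intersections says exactly that every two-generated ideal is `v`-invertible,
and clearing denominators extends this to two-generated fractional ideals. Because addition of
fractional ideals is idempotent, `(X + Y + Z)(XY + YZ + ZX) = (X + Y)(Y + Z)(Z + X)`, so `X + Y + Z`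
is `v`-invertible once the three pairwise sums are; this drives an induction on the number of
generators.
-/

open FractionalIdeal

variable {D K : Type*} [CommRing D] [IsDomain D] [Field K] [Algebra D K] [IsFractionRing D K]

/-- The `v`-operation: `A ↦ (A⁻¹)⁻¹`, where `A⁻¹ = (D : A) = 1 / A`. -/
noncomputable def vop (A : FractionalIdeal (nonZeroDivisors D) K) :
    FractionalIdeal (nonZeroDivisors D) K := 1 / (1 / A)

/-- `A` is `v`-invertible if `(A·A⁻¹)^v = D`. -/
noncomputable def IsVInvertible (A : FractionalIdeal (nonZeroDivisors D) K) : Prop :=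
  vop (A * (1 / A)) = 1

open scoped nonZeroDivisors

namespace FractionalIdeal

instance {R P : Type*} [CommRing R] [CommRing P] [NoZeroDivisors P] [Algebra R P]
    {S : Submonoid R} : NoZeroDivisors (FractionalIdeal S P) where
  eq_zero_or_eq_zero_of_mul_eq_zero {A B} h := by
    simpa only [← coeToSubmodule_eq_bot, coe_mul, Submodule.mul_eq_bot] using h

variable {A B : FractionalIdeal D⁰ K}

protected lemma inv_ne_zero (hA : A ≠ 0) : A⁻¹ ≠ 0 :=
  right_ne_zero_of_mul (bot_lt_mul_inv hA).ne'

lemma inv_add (hA : A ≠ 0) (hB : B ≠ 0) : (A + B)⁻¹ = A⁻¹ ⊓ B⁻¹ := by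
  have hAB : A + B ≠ 0 := by simp [hA]
  refine le_antisymm (le_inf ?_ ?_) ((le_div_iff_mul_le hAB).mpr ?_)
  · exact inv_anti_mono hA hAB le_self_add
  · exact inv_anti_mono hB hAB le_add_self
  calc (A⁻¹ ⊓ B⁻¹) * (A + B) = (A⁻¹ ⊓ B⁻¹) * A + (A⁻¹ ⊓ B⁻¹) * B := mul_add _ _ _
    _ ≤ A⁻¹ * A + B⁻¹ * B :=
      add_le_add (mul_le_mul_left inf_le_left A) (mul_le_mul_left inf_le_right B)
    _ ≤ 1 + 1 := by
      rw [mul_comm A⁻¹, mul_comm B⁻¹]; exact add_le_add mul_one_div_le_one mul_one_div_le_one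
    _ = 1 := by rw [← sup_eq_add, sup_idem]

lemma inv_mul_le_inv (A B : FractionalIdeal D⁰ K) : B * (A * B)⁻¹ ≤ A⁻¹ := by
  rcases eq_or_ne A 0 with rfl | hA
  · simp [inv_zero']
  refine (le_div_iff_mul_le hA).mpr ?_
  calc B * (A * B)⁻¹ * A = A * B * (A * B)⁻¹ := by ring
    _ ≤ 1 := mul_one_div_le_one

lemma inv_mul_inv_le (A B : FractionalIdeal D⁰ K) : A⁻¹ * B⁻¹ ≤ (A * B)⁻¹ := by
  rcases eq_or_ne A 0 with rfl | hA
  · simp [inv_zero']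
  rcases eq_or_ne B 0 with rfl | hB
  · simp [inv_zero']
  refine (le_div_iff_mul_le (mul_ne_zero hA hB)).mpr ?_
  calc A⁻¹ * B⁻¹ * (A * B) = A * A⁻¹ * (B * B⁻¹) := by ring
    _ ≤ 1 := mul_le_one' mul_one_div_le_one mul_one_div_le_one

lemma add_add_mul_eq_mul_mul {R P : Type*} [CommRing R] [CommRing P] [Algebra R P]
    {S : Submonoid R} (X Y Z : FractionalIdeal S P) :
    (X + Y + Z) * (X * Y + Y * Z + Z * X) = (X + Y) * (Y + Z) * (Z + X) := by
  have hle : X * Y * Z ≤ (X + Y) * (Y + Z) * (Z + X) :=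
    mul_le_mul' (mul_le_mul' le_self_add le_self_add) le_self_add
  calc (X + Y + Z) * (X * Y + Y * Z + Z * X) = (X + Y) * (Y + Z) * (Z + X) + X * Y * Z := by ring
    _ = (X + Y) * (Y + Z) * (Z + X) := by rw [← sup_eq_add, sup_eq_left.mpr hle]

lemma spanSingleton_mul_inf {R L : Type*} [CommRing R] [Field L] [Algebra R L] {S : Submonoid R}
    [IsLocalization S L] (x : L) (A B : FractionalIdeal S L) :
    spanSingleton S x * (A ⊓ B) = spanSingleton S x * A ⊓ spanSingleton S x * B := by
  rcases eq_or_ne x 0 with rfl | hx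
  · simp
  refine le_antisymm (le_inf (mul_le_mul_right inf_le_left _) (mul_le_mul_right inf_le_right _))
    (le_spanSingleton_mul_iff.mpr fun z hz => ?_)
  obtain ⟨a, ha, rfl⟩ := mem_singleton_mul.mp hz.1
  obtain ⟨b, hb, hab⟩ := mem_singleton_mul.mp hz.2
  exact ⟨a, ⟨ha, mul_left_cancel₀ hx hab ▸ hb⟩, rfl⟩

lemma spanSingleton_inf_spanSingleton {x y : K} (hx : x ≠ 0) (hy : y ≠ 0) :
    spanSingleton D⁰ x ⊓ spanSingleton D⁰ y =
      spanSingleton D⁰ (x * y) * (spanSingleton D⁰ x + spanSingleton D⁰ y)⁻¹ := by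
  rw [add_comm, inv_add (spanSingleton_ne_zero_iff.mpr hy) (spanSingleton_ne_zero_iff.mpr hx),
    spanSingleton_inv, spanSingleton_inv, spanSingleton_mul_inf, spanSingleton_mul_spanSingleton,
    spanSingleton_mul_spanSingleton, mul_inv_cancel_right₀ hy, mul_comm x, mul_inv_cancel_right₀ hx]

lemma coeIdeal_span_singleton_inf_span_singleton {a b : D} (ha : a ≠ 0) (hb : b ≠ 0) :
    ((Ideal.span {a} ⊓ Ideal.span {b} : Ideal D) : FractionalIdeal D⁰ K) =
      spanSingleton D⁰ (algebraMap D K (a * b)) *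
        (spanSingleton D⁰ (algebraMap D K a) + spanSingleton D⁰ (algebraMap D K b))⁻¹ := by
  rw [coeIdeal_inf, coeIdeal_span_singleton, coeIdeal_span_singleton, map_mul,
    spanSingleton_inf_spanSingleton] <;> simpa

lemma exists_eq_spanFinset_of_fg {R L : Type*} [CommRing R] [Field L] [Algebra R L]
    [IsFractionRing R L] {F : FractionalIdeal R⁰ L} (hF : (F : Submodule R L).FG) :
    ∃ s : Finset L, F = spanFinset R s id := by
  obtain ⟨s, hs⟩ := hF
  exact ⟨s, coeToSubmodule_injective (by simp [hs])⟩

lemma spanFinset_cons {R L : Type*} [CommRing R] [Field L] [Algebra R L] [IsFractionRing R L]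
    (s : Finset L) (x : L) (hx : x ∉ s) :
    spanFinset R (s.cons x hx) id = spanSingleton R⁰ x + spanFinset R s id :=
  coeToSubmodule_injective (by simp [Submodule.span_insert, coe_spanSingleton])

end FractionalIdeal

lemma vop_eq_inv_inv (A : FractionalIdeal D⁰ K) : vop A = A⁻¹⁻¹ := rfl

lemma vop_zero : vop (0 : FractionalIdeal D⁰ K) = 0 := by
  simp [vop_eq_inv_inv, inv_zero']

lemma vop_one : vop (1 : FractionalIdeal D⁰ K) = 1 := by
  simp [vop_eq_inv_inv]

lemma le_vop (A : FractionalIdeal D⁰ K) : A ≤ vop A := by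
  rcases eq_or_ne A 0 with rfl | hA
  · exact zero_le _
  exact (le_div_iff_mul_le (FractionalIdeal.inv_ne_zero hA)).mpr mul_one_div_le_one

lemma vop_mono : Monotone (vop : FractionalIdeal D⁰ K → FractionalIdeal D⁰ K) := by
  intro A B hAB
  rcases eq_or_ne A 0 with rfl | hA
  · simp [vop_zero]
  have hB : B ≠ 0 := ((pos_iff_ne_zero.mpr hA).trans_le hAB).ne'
  exact inv_anti_mono (FractionalIdeal.inv_ne_zero hB) (FractionalIdeal.inv_ne_zero hA)
    (inv_anti_mono hA hB hAB)

lemma vop_vop_mul (A B : FractionalIdeal D⁰ K) : vop (vop A * B) = vop (A * B) := by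
  suffices (vop A * B)⁻¹ = (A * B)⁻¹ by rw [vop_eq_inv_inv, this, vop_eq_inv_inv]
  rcases eq_or_ne A 0 with rfl | hA
  · simp [vop_zero]
  rcases eq_or_ne B 0 with rfl | hB
  · simp
  have hvA : vop A ≠ 0 := ((le_vop A).trans_lt' (pos_iff_ne_zero.mpr hA)).ne'
  refine le_antisymm
    (inv_anti_mono (mul_ne_zero hA hB) (mul_ne_zero hvA hB) (mul_le_mul_left (le_vop A) B))
    ((le_div_iff_mul_le (mul_ne_zero hvA hB)).mpr ?_)
  calc (A * B)⁻¹ * (vop A * B) = B * (A * B)⁻¹ * vop A := by ring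
    _ ≤ A⁻¹ * A⁻¹⁻¹ := mul_le_mul' (inv_mul_le_inv A B) le_rfl
    _ ≤ 1 := mul_one_div_le_one

section VInvertible

variable {A B C : FractionalIdeal D⁰ K}

lemma isVInvertible_of_le_mul_inv (hC : vop C = 1) (hle : C ≤ A * A⁻¹) : IsVInvertible A := by
  refine le_antisymm ?_ ?_
  · simpa only [vop_one] using vop_mono (mul_one_div_le_one (I := A))
  · exact hC.ge.trans (vop_mono hle)

lemma isVInvertible_spanSingleton {x : K} (hx : x ≠ 0) :
    IsVInvertible (spanSingleton D⁰ x) :=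
  isVInvertible_of_le_mul_inv vop_one (spanSingleton_mul_inv K hx).ge

lemma IsVInvertible.mul (hA : IsVInvertible A) (hB : IsVInvertible B) :
    IsVInvertible (A * B) := by
  have hA' : vop (A * A⁻¹) = 1 := hA
  refine isVInvertible_of_le_mul_inv (C := A * A⁻¹ * (B * B⁻¹)) ?_ ?_
  · rw [← vop_vop_mul, hA', one_mul]
    exact hB
  calc A * A⁻¹ * (B * B⁻¹) = A * B * (A⁻¹ * B⁻¹) := by ring
    _ ≤ A * B * (A * B)⁻¹ := mul_le_mul_right (inv_mul_inv_le A B) _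

lemma IsVInvertible.of_mul (h : IsVInvertible (A * B)) : IsVInvertible A :=
  isVInvertible_of_le_mul_inv h <| by
    calc A * B * (A * B)⁻¹ = A * (B * (A * B)⁻¹) := mul_assoc _ _ _
      _ ≤ A * A⁻¹ := mul_le_mul_right (inv_mul_le_inv A B) A

lemma isVInvertible_spanSingleton_mul_iff {x : K} (hx : x ≠ 0) :
    IsVInvertible (spanSingleton D⁰ x * A) ↔ IsVInvertible A :=
  ⟨fun h => (mul_comm (spanSingleton D⁰ x) A ▸ h).of_mul, (isVInvertible_spanSingleton hx).mul⟩

lemma isVInvertible_inv_iff : IsVInvertible A⁻¹ ↔ IsVInvertible A := by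
  change vop (A⁻¹ * vop A) = 1 ↔ vop (A * A⁻¹) = 1
  rw [mul_comm, vop_vop_mul]

lemma isVInvertible_add_add {X Y Z : FractionalIdeal D⁰ K}
    (hXY : X + Y ≠ 0 → IsVInvertible (X + Y)) (hYZ : Y + Z ≠ 0 → IsVInvertible (Y + Z))
    (hZX : Z + X ≠ 0 → IsVInvertible (Z + X)) (h : X + Y + Z ≠ 0) :
    IsVInvertible (X + Y + Z) := by
  rcases eq_or_ne (X + Y) 0 with hXY0 | hXY0
  · obtain ⟨rfl, rfl⟩ := add_eq_zero.mp hXY0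
    simpa using hYZ (by simpa using h)
  rcases eq_or_ne (Y + Z) 0 with hYZ0 | hYZ0
  · obtain ⟨rfl, rfl⟩ := add_eq_zero.mp hYZ0
    simpa using hXY (by simpa using h)
  rcases eq_or_ne (Z + X) 0 with hZX0 | hZX0
  · obtain ⟨rfl, rfl⟩ := add_eq_zero.mp hZX0
    simpa using hXY (by simpa using h)
  have hprod := ((hXY hXY0).mul (hYZ hYZ0)).mul (hZX hZX0)
  rw [← add_add_mul_eq_mul_mul] at hprod
  exact hprod.of_mul

lemma isVInvertible_spanSingleton_add_spanSingleton
    (hpair : ∀ a b : D, a ≠ 0 → b ≠ 0 →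
      IsVInvertible (spanSingleton D⁰ (algebraMap D K a) + spanSingleton D⁰ (algebraMap D K b)))
    (x y : K) (h : spanSingleton D⁰ x + spanSingleton D⁰ y ≠ 0) :
    IsVInvertible (spanSingleton D⁰ x + spanSingleton D⁰ y) := by
  rcases eq_or_ne x 0 with rfl | hx
  · simp only [spanSingleton_zero, zero_add] at h ⊢
    exact isVInvertible_spanSingleton (spanSingleton_ne_zero_iff.mp h)
  rcases eq_or_ne y 0 with rfl | hy
  · simp only [spanSingleton_zero, add_zero] at h ⊢
    exact isVInvertible_spanSingleton (spanSingleton_ne_zero_iff.mp h)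
  classical
  obtain ⟨d, hd⟩ := IsLocalization.exist_integer_multiples_of_finset D⁰ {x, y}
  obtain ⟨a, ha⟩ := hd x (by simp)
  obtain ⟨b, hb⟩ := hd y (by simp)
  have hd0 : algebraMap D K d ≠ 0 := IsFractionRing.to_map_ne_zero_of_mem_nonZeroDivisors d.2
  have ha0 : a ≠ 0 := by
    rintro rfl
    rw [map_zero, Algebra.smul_def] at ha
    exact mul_ne_zero hd0 hx ha.symm
  have hb0 : b ≠ 0 := by
    rintro rfl
    rw [map_zero, Algebra.smul_def] at hb
    exact mul_ne_zero hd0 hy hb.symm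
  rw [← isVInvertible_spanSingleton_mul_iff hd0, mul_add, spanSingleton_mul_spanSingleton,
    spanSingleton_mul_spanSingleton, ← Algebra.smul_def, ← Algebra.smul_def, ← ha, ← hb]
  exact hpair a b ha0 hb0

lemma isVInvertible_of_fg
    (hpair : ∀ x y : K, spanSingleton D⁰ x + spanSingleton D⁰ y ≠ 0 →
      IsVInvertible (spanSingleton D⁰ x + spanSingleton D⁰ y))
    {F : FractionalIdeal D⁰ K} (hF : F ≠ 0) (hFG : (F : Submodule D K).FG) :
    IsVInvertible F := by
  -- Two generators `x, y` are carried along so that in the inductive step all three pairwise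
  -- sums of `x`, `y`, `z + S` again have this shape.
  have hspan : ∀ (s : Finset K) (x y : K),
      spanSingleton D⁰ x + spanSingleton D⁰ y + spanFinset D s id ≠ 0 →
        IsVInvertible (spanSingleton D⁰ x + spanSingleton D⁰ y + spanFinset D s id) := by
    intro s
    induction s using Finset.cons_induction with
    | empty =>
      simpa only [show spanFinset D (∅ : Finset K) id = 0 from spanFinset_eq_zero.mpr (by simp),
        add_zero] using hpair
    | cons z s hz ih =>
      intro x y
      rw [spanFinset_cons]
      refine isVInvertible_add_add (hpair x y) ?_ ?_
      · simpa only [add_assoc] using ih y z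
      · rw [add_right_comm]
        exact ih z x
  obtain ⟨s, rfl⟩ := exists_eq_spanFinset_of_fg hFG
  simpa using hspan s 0 0 (by simpa using hF)

lemma isVInvertible_span_inf_span_iff {a b : D} (ha : a ≠ 0) (hb : b ≠ 0) :
    IsVInvertible ((Ideal.span {a} ⊓ Ideal.span {b} : Ideal D) : FractionalIdeal D⁰ K) ↔
      IsVInvertible
        (spanSingleton D⁰ (algebraMap D K a) + spanSingleton D⁰ (algebraMap D K b)) := by
  rw [coeIdeal_span_singleton_inf_span_singleton ha hb,
    isVInvertible_spanSingleton_mul_iff (by simpa using mul_ne_zero ha hb), isVInvertible_inv_iff]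

end VInvertible

/-- `D` is a `v`-domain iff `aD ∩ bD` is `v`-invertible for all nonzero `a, b ∈ D`. -/
theorem vDomain_iff_inter_principal_vInvertible :
    (∀ F : FractionalIdeal (nonZeroDivisors D) K, F ≠ 0 → (F : Submodule D K).FG →
        IsVInvertible F) ↔
      ∀ a b : D, a ≠ 0 → b ≠ 0 →
        IsVInvertible ((Ideal.span {a} ⊓ Ideal.span {b} : Ideal D) :
          FractionalIdeal (nonZeroDivisors D) K) := by
  constructor
  · intro H a b ha hb
    refine (isVInvertible_span_inf_span_iff ha hb).mpr (H _ ?_ ?_)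
    · simp [spanSingleton_eq_zero_iff, ha]
    · rw [coe_add, coe_spanSingleton, coe_spanSingleton]
      exact (Submodule.fg_span_singleton _).sup (Submodule.fg_span_singleton _)
  · intro H F hF hFG
    refine isVInvertible_of_fg (isVInvertible_spanSingleton_add_spanSingleton ?_) hF hFG
    exact fun a b ha hb => (isVInvertible_span_inf_span_iff ha hb).mp (H a b ha hb)
end

section
/- Let D be an integral domain expressible as D = ⋂_{λ∈Λ} D_λ where each D_λ is a flat overring of D. If each D_λ is a v-domain (with respect to its own v-operation), then D is a v-domain. -/
/-! For `F` finitely generated and `x ∈ (F F⁻¹)⁻¹`, fix an overring `T`. Flatness of `T` gives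
`(FT)⁻¹ ⊆ F⁻¹T`, since `F⁻¹` is the kernel of `y ↦ (f y mod D)_{f}` over generators `f` of `F` and
base change along `T` preserves kernels. Hence `(FT)(FT)⁻¹ ⊆ (F F⁻¹)T`, so `x` lies in
`((FT)(FT)⁻¹)⁻¹`, which is `T` as `T` is a `v`-domain. Thus `x ∈ ⋂ T = D`, so `(F F⁻¹)⁻¹ = D`.
-/

open FractionalIdeal

variable {D K : Type*} [CommRing D] [IsDomain D] [Field K] [Algebra D K] [IsFractionRing D K]

/-- `R` is a `v`-domain: every nonzero finitely generated fractional ideal `F` satisfies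
`(F·F⁻¹)^v = R`. -/
noncomputable def IsVDomain (R K : Type*) [CommRing R] [IsDomain R] [Field K] [Algebra R K]
    [IsFractionRing R K] : Prop :=
  ∀ F : FractionalIdeal (nonZeroDivisors R) K, F ≠ 0 → (F : Submodule R K).FG →
    1 / (1 / (F * (1 / F))) = 1

namespace FractionalIdeal

theorem mul_ne_zero_of_ne_zero {R P : Type*} [CommRing R] [CommRing P] [NoZeroDivisors P]
    [Algebra R P] {S : Submonoid R} {I J : FractionalIdeal S P} (hI : I ≠ 0) (hJ : J ≠ 0) :
    I * J ≠ 0 := by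
  obtain ⟨x, hx, hx0⟩ : ∃ x ∈ I, x ≠ 0 := by simpa [eq_zero_iff] using hI
  obtain ⟨y, hy, hy0⟩ : ∃ y ∈ J, y ≠ 0 := by simpa [eq_zero_iff] using hJ
  exact fun h => mul_ne_zero hx0 hy0 ((mem_zero_iff _).1 (h ▸ mul_mem_mul hx hy))

variable {R L : Type*} [CommRing R] [IsDomain R] [Field L] [Algebra R L] [IsFractionRing R L]
  {I J : FractionalIdeal (nonZeroDivisors R) L}

theorem one_div_ne_zero (hI : I ≠ 0) : 1 / I ≠ 0 := by
  obtain ⟨a, ha, hintegral⟩ := I.isFractional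
  have hmem : algebraMap R L a ∈ 1 / I := (mem_div_iff_of_ne_zero hI).2 fun y hy => by
    obtain ⟨b, hb⟩ := hintegral y hy
    exact (mem_one_iff _).2 ⟨b, by rw [hb, Algebra.smul_def]⟩
  intro h
  rw [h, mem_zero_iff] at hmem
  exact IsFractionRing.to_map_ne_zero_of_mem_nonZeroDivisors ha hmem

theorem le_one_div_one_div (hI : I ≠ 0) : I ≤ 1 / (1 / I) := by
  rw [le_div_iff_mul_le (one_div_ne_zero hI)]
  exact mul_one_div_le_one

theorem one_div_le_one_div_of_le (hI : I ≠ 0) (hIJ : I ≤ J) : 1 / J ≤ 1 / I := by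
  rw [le_div_iff_mul_le hI]
  calc 1 / J * I ≤ 1 / J * J := mul_le_mul_right hIJ _
    _ = J * (1 / J) := mul_comm _ _
    _ ≤ 1 := mul_one_div_le_one

theorem one_div_one_div_one_div (hI : I ≠ 0) : 1 / (1 / (1 / I)) = 1 / I :=
  le_antisymm (one_div_le_one_div_of_le hI (le_one_div_one_div hI))
    (le_one_div_one_div (one_div_ne_zero hI))

theorem one_div_one_div_eq_one_iff (hI : I ≠ 0) (hI1 : I ≤ 1) :
    1 / (1 / I) = 1 ↔ 1 / I ≤ 1 := by
  refine ⟨fun h => ?_, fun h => ?_⟩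
  · rw [← one_div_one_div_one_div hI, h, div_one]
  · have h1 : 1 ≤ 1 / I := by rwa [le_div_iff_mul_le hI, one_mul]
    rw [le_antisymm h h1, div_one]

end FractionalIdeal

theorem isVDomain_iff {R L : Type*} [CommRing R] [IsDomain R] [Field L] [Algebra R L]
    [IsFractionRing R L] :
    IsVDomain R L ↔ ∀ F : FractionalIdeal (nonZeroDivisors R) L, F ≠ 0 →
      (F : Submodule R L).FG → 1 / (F * (1 / F)) ≤ 1 :=
  forall₂_congr fun _ hF => imp_congr_right fun _ =>
    one_div_one_div_eq_one_iff (mul_ne_zero_of_ne_zero hF (one_div_ne_zero hF)) mul_one_div_le_one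

open TensorProduct Submodule

namespace Subalgebra

variable (T : Subalgebra D K)

theorem tmul_eq_one_tmul_mul (t : T) (k : K) :
    t ⊗ₜ[D] k = (1 : T) ⊗ₜ[D] ((t : K) * k) := by
  obtain ⟨⟨a, d⟩, h⟩ := IsLocalization.mk'_surjective (nonZeroDivisors D) (t : K)
  replace h : algebraMap D K a / algebraMap D K d = t := by
    simpa [IsFractionRing.mk'_eq_div] using h
  have hd : algebraMap D K d ≠ 0 := IsFractionRing.to_map_ne_zero_of_mem_nonZeroDivisors d.2
  have hdt : (d : D) • t = a • (1 : T) := Subtype.ext <| by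
    simp [Algebra.smul_def, ← h, mul_div_cancel₀ _ hd]
  calc t ⊗ₜ[D] k = t ⊗ₜ[D] ((d : D) • ((algebraMap D K d)⁻¹ * k)) := by
        rw [Algebra.smul_def, ← mul_assoc, mul_inv_cancel₀ hd, one_mul]
    _ = (a • (1 : T)) ⊗ₜ[D] ((algebraMap D K d)⁻¹ * k) := by rw [← smul_tmul, hdt]
    _ = (1 : T) ⊗ₜ[D] ((t : K) * k) := by
        rw [smul_tmul, Algebra.smul_def, ← h, ← mul_assoc, div_eq_mul_inv]

theorem mem_span_of_mul_mem [Module.Flat D T] {ι : Type*} [Fintype ι] (f : ι → K) {x : K}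
    (hx : ∀ j, f j * x ∈ T) :
    x ∈ span T {y | ∀ j, f j * y ∈ (1 : Submodule D K)} := by
  classical
  let φ : K →ₗ[D] ι → K ⧸ (1 : Submodule D K) :=
    LinearMap.pi fun j => (1 : Submodule D K).mkQ ∘ₗ LinearMap.mulLeft D (f j)
  have hker : ∀ y, y ∈ LinearMap.ker φ ↔ ∀ j, f j * y ∈ (1 : Submodule D K) := by
    simp [φ, funext_iff]
  -- moving each `f j * x ∈ T` to the left factor leaves `1` on the right, which `mkQ` kills
  have hφx : LinearMap.lTensor T φ ((1 : T) ⊗ₜ x) = 0 := by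
    refine (piRight D D T fun _ => K ⧸ (1 : Submodule D K)).injective (funext fun j => ?_)
    have hj : (1 : T) ⊗ₜ[D] (f j * x) = (⟨f j * x, hx j⟩ : T) ⊗ₜ[D] (1 : K) := by
      rw [T.tmul_eq_one_tmul_mul ⟨f j * x, hx j⟩, mul_one]
    calc _ = LinearMap.lTensor T (1 : Submodule D K).mkQ ((1 : T) ⊗ₜ[D] (f j * x)) := rfl
      _ = 0 := by
        rw [hj, LinearMap.lTensor_tmul, mkQ_apply,
          (Quotient.mk_eq_zero _).2 (Submodule.one_le.1 le_rfl), tmul_zero]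
  obtain ⟨u, hu⟩ :=
    (Module.Flat.lTensor_exact T (LinearMap.exact_subtype_ker_map φ) _).1 hφx
  have hx : x = Algebra.TensorProduct.productMap T.val (AlgHom.id D K) ((1 : T) ⊗ₜ x) := by
    simp
  rw [hx, ← hu]
  clear hu hx
  induction u using TensorProduct.induction_on with
  | zero => simp
  | tmul t y =>
    have hy : (y : K) ∈ {y | ∀ j, f j * y ∈ (1 : Submodule D K)} := (hker y).1 y.2
    simpa [Algebra.smul_def] using Submodule.smul_mem _ t (subset_span hy)
  | add u v hu hv => simpa using add_mem hu hv

theorem one_div_span_le_span_one_div [Module.Flat D T] {M : Submodule D K} (hM : M.FG) :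
    (1 : Submodule T K) / span T (M : Set K) ≤ span T ((1 / M : Submodule D K) : Set K) := by
  obtain ⟨s, rfl⟩ := hM
  intro x hx
  have hmul : ∀ f : s, (f : K) * x ∈ T := fun f => by
    obtain ⟨t, ht⟩ := mem_one.1 (mem_div_iff_forall_mul_mem.1 hx f (subset_span (subset_span f.2)))
    rw [mul_comm, ← ht]
    exact t.2
  refine span_mono (fun y hy => ?_) (T.mem_span_of_mul_mem (fun f : s => (f : K)) hmul)
  have hspan : span D (s : Set K) ≤ (1 : Submodule D K).comap (LinearMap.mulLeft D y) :=
    span_le.2 fun z hz => by simpa [mul_comm] using hy ⟨z, hz⟩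
  exact mem_div_iff_forall_mul_mem.2 fun z hz => hspan hz

variable [IsFractionRing T K]

theorem coe_extendedHom_eq_span (I : FractionalIdeal (nonZeroDivisors D) K) :
    (extendedHom K T I : Submodule T K) = span T ((I : Submodule D K) : Set K) := by
  have hmap : IsLocalization.map K (algebraMap D T)
      (nonZeroDivisors_le_comap_nonZeroDivisors_of_injective _
        (FaithfulSMul.algebraMap_injective D T)) = RingHom.id K :=
    IsLocalization.ringHom_ext (nonZeroDivisors D) (by ext; simp)
  rw [extendedHom'_apply, coe_extended_eq_span, hmap, RingHom.coe_id, Set.image_id]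
  rfl

theorem one_div_extendedHom_le [Module.Flat D T] {F : FractionalIdeal (nonZeroDivisors D) K}
    (hF : F ≠ 0) (hFG : (F : Submodule D K).FG) :
    1 / extendedHom K T F ≤ extendedHom K T (1 / F) := by
  rw [← coe_le_coe, coe_div ((extendedHom_eq_zero_iff K T).not.2 hF), coe_one,
    coe_extendedHom_eq_span, coe_extendedHom_eq_span, coe_div hF, coe_one]
  exact T.one_div_span_le_span_one_div hFG

theorem extendedHom_one_div_le {I : FractionalIdeal (nonZeroDivisors D) K} (hI : I ≠ 0) :
    extendedHom K T (1 / I) ≤ 1 / extendedHom K T I := by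
  rw [le_div_iff_mul_le ((extendedHom_eq_zero_iff K T).not.2 hI), ← RingHom.map_mul, mul_comm]
  exact extended_le_one_of_le_one _ _ _ mul_one_div_le_one

theorem mem_of_mem_one_div_mul_one_div [Module.Flat D T] (hT : IsVDomain T K)
    {F : FractionalIdeal (nonZeroDivisors D) K} (hF : F ≠ 0) (hFG : (F : Submodule D K).FG)
    {x : K} (hx : x ∈ 1 / (F * (1 / F))) : x ∈ T := by
  set G := extendedHom K T F
  have hG : G ≠ 0 := (extendedHom_eq_zero_iff K T).not.2 hF
  have hGFG : (G : Submodule T K).FG := by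
    obtain ⟨s, hs⟩ := hFG
    exact ⟨s, by rw [coe_extendedHom_eq_span, ← span_span_of_tower (R := D), hs]⟩
  have hGA : G * (1 / G) ≤ extendedHom K T (F * (1 / F)) := by
    rw [RingHom.map_mul]
    exact mul_le_mul_right (T.one_div_extendedHom_le hF hFG) G
  have hxA : x ∈ extendedHom K T (1 / (F * (1 / F))) := by
    rw [← mem_coe, coe_extendedHom_eq_span]
    exact subset_span hx
  have hxG : x ∈ 1 / (G * (1 / G)) :=
    one_div_le_one_div_of_le (mul_ne_zero_of_ne_zero hG (one_div_ne_zero hG)) hGA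
      (T.extendedHom_one_div_le (mul_ne_zero_of_ne_zero hF (one_div_ne_zero hF)) hxA)
  obtain ⟨t, rfl⟩ := (mem_one_iff _).1 (isVDomain_iff.1 hT G hG hGFG hxG)
  exact t.2

end Subalgebra

/-- If `D` is an intersection of flat overrings each of which is a `v`-domain, then `D`
is a `v`-domain. -/
theorem vDomain_of_inter_flat_overrings {ι : Type*} (T : ι → Subalgebra D K)
    [∀ i, IsFractionRing (T i) K]
    (hflat : ∀ i, Module.Flat D (T i))
    (hv : ∀ i, IsVDomain (T i) K)
    (hint : ⨅ i, T i = ⊥) :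
    IsVDomain D K := by
  rw [isVDomain_iff]
  intro F hF hFG x hx
  have hxT : ∀ i, x ∈ T i := fun i =>
    have := hflat i
    (T i).mem_of_mem_one_div_mul_one_div (hv i) hF hFG hx
  obtain ⟨a, rfl⟩ := Algebra.mem_bot.1 (hint ▸ Algebra.mem_iInf.2 hxT)
  exact (mem_one_iff _).2 ⟨a, rfl⟩
end

section
/- Let D be a v-domain and T an overring of D that is v-linked over D (i.e., for every nonzero ideal I of D with I⁻¹ = D one has (IT)⁻¹ = T). Then T is a v-domain. -/
open FractionalIdeal

variable {D K : Type*} [CommRing D] [IsDomain D] [Field K] [Algebra D K] [IsFractionRing D K]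

/-!
Write a finitely generated `T`-ideal `F` as `I T` with `I` a finitely generated `D`-ideal.
Since `D` is a `v`-domain, `J = I I⁻¹` is an integral ideal with `J⁻¹ = D`, so `(J T)⁻¹ = T`
because `T` is `v`-linked over `D`. But `J T = (I T)(I⁻¹ T) ⊆ F F⁻¹ ⊆ T`, and inverses reverse
inclusions, so `(F F⁻¹)⁻¹ = T` and hence `(F F⁻¹)^v = T`.
-/

open scoped nonZeroDivisors

namespace FractionalIdeal

theorem one_div_ne_zero_s13 {A : FractionalIdeal D⁰ K} (hA : A ≠ 0) : 1 / A ≠ 0 := by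
  obtain ⟨b, hb, hbA⟩ := A.isFractional
  have hb_mem : algebraMap D K b ∈ 1 / A := by
    rw [mem_div_iff_of_ne_zero hA]
    intro y hy
    obtain ⟨a, ha⟩ := hbA y hy
    exact (mem_one_iff _).mpr ⟨a, by rw [ha, Algebra.smul_def]⟩
  intro h
  rw [h, mem_zero_iff, IsFractionRing.to_map_eq_zero_iff] at hb_mem
  exact nonZeroDivisors.ne_zero hb hb_mem

theorem one_div_le_one_div {A B : FractionalIdeal D⁰ K} (hA : A ≠ 0) (h : A ≤ B) :
    1 / B ≤ 1 / A := by
  rw [le_div_iff_mul_le hA, mul_comm]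
  exact (mul_le_mul_left h _).trans mul_one_div_le_one

theorem le_one_div_one_div_s13 (A : FractionalIdeal D⁰ K) : A ≤ 1 / (1 / A) := by
  rcases eq_or_ne A 0 with rfl | hA
  · simp
  rw [le_div_iff_mul_le (one_div_ne_zero_s13 hA)]
  exact mul_one_div_le_one

theorem one_div_one_div_one_div_s13 (A : FractionalIdeal D⁰ K) : 1 / (1 / (1 / A)) = 1 / A := by
  rcases eq_or_ne A 0 with rfl | hA
  · simp
  exact (one_div_le_one_div hA (le_one_div_one_div_s13 A)).antisymm (le_one_div_one_div_s13 _)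

theorem one_div_eq_one_of_one_div_one_div_eq_one {A : FractionalIdeal D⁰ K}
    (h : 1 / (1 / A) = 1) : 1 / A = 1 := by
  rw [← one_div_one_div_one_div_s13, h, div_one]

theorem one_div_eq_one_of_le {A B : FractionalIdeal D⁰ K} (hA : 1 / A = 1) (hAB : A ≤ B)
    (hB : B ≤ 1) : 1 / B = 1 := by
  have hA0 : A ≠ 0 := by rintro rfl; simp at hA
  refine (one_div_le_one_div hA0 hAB |>.trans hA.le).antisymm ?_
  rw [le_div_iff_mul_le (ne_bot_of_le_ne_bot hA0 hAB), one_mul]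
  exact hB

theorem extended_one_div_le {B : Type*} (L : Type*) [CommRing B] [IsDomain B] [Field L]
    [Algebra B L] [IsFractionRing B L] {f : D →+* B} (hf : D⁰ ≤ B⁰.comap f)
    (I : FractionalIdeal D⁰ K) (hI : I.extended L hf ≠ 0) :
    (1 / I).extended L hf ≤ 1 / I.extended L hf := by
  rw [le_div_iff_mul_le hI, ← extended_mul]
  exact extended_le_one_of_le_one L hf _ (mul_comm I _ ▸ mul_one_div_le_one)

section Overring

variable (T : Subalgebra D K) [IsFractionRing T K]

theorem coe_extendedHom_subalgebra (I : FractionalIdeal D⁰ K) :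
    (extendedHom K T I : Submodule T K) = Submodule.span T ((I : Submodule D K) : Set K) := by
  have hid : IsLocalization.map (S := K) K (algebraMap D T)
      (nonZeroDivisors_le_comap_nonZeroDivisors_of_injective _
        (FaithfulSMul.algebraMap_injective D T)) = RingHom.id K :=
    IsLocalization.ringHom_ext D⁰ (by ext; simp)
  rw [extendedHom'_apply, coe_extended_eq_span, hid, RingHom.coe_id, Set.image_id]
  rfl

variable {T}

theorem exists_extendedHom_eq_of_fg {F : FractionalIdeal T⁰ K} (hF : (F : Submodule T K).FG) :
    ∃ I : FractionalIdeal D⁰ K, (I : Submodule D K).FG ∧ extendedHom K T I = F := by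
  obtain ⟨s, hs⟩ := hF
  refine ⟨spanFinset D s id, Submodule.fg_span (s.finite_toSet.image _), ?_⟩
  rw [← coeToSubmodule_inj, coe_extendedHom_subalgebra, spanFinset_coe,
    Submodule.span_span_of_tower, Set.image_id, hs]

end Overring

end FractionalIdeal

def IsVLinked (T : Subalgebra D K) [IsFractionRing T K] : Prop :=
  ∀ I : Ideal D, I ≠ ⊥ → 1 / (I : FractionalIdeal D⁰ K) = 1 →
    1 / ((I.map (algebraMap D T) : Ideal T) : FractionalIdeal T⁰ K) = 1

theorem IsVLinked.one_div_extendedHom_eq_one {T : Subalgebra D K} [IsFractionRing T K]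
    (hT : IsVLinked T) {A : FractionalIdeal D⁰ K} (hA1 : A ≤ 1) (hA : 1 / A = 1) :
    1 / extendedHom K T A = 1 := by
  obtain ⟨I, rfl⟩ := le_one_iff_exists_coeIdeal.mp hA1
  have hI : I ≠ ⊥ := by rintro rfl; simp at hA
  rw [extendedHom_coeIdeal_eq_map]
  exact hT I hI hA

/-- A `v`-linked overring of a `v`-domain is a `v`-domain. -/
theorem vLinked_overring_of_vDomain (hD : IsVDomain D K) (T : Subalgebra D K)
    [IsFractionRing T K]
    (hlink : ∀ I : Ideal D, I ≠ ⊥ →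
      1 / ((I : FractionalIdeal (nonZeroDivisors D) K)) = 1 →
      1 / ((Ideal.map (algebraMap D T) I : Ideal T) :
        FractionalIdeal (nonZeroDivisors T) K) = 1) :
    IsVDomain T K := by
  intro F hF hFG
  obtain ⟨I, hIfg, rfl⟩ := exists_extendedHom_eq_of_fg hFG
  have hI : I ≠ 0 := by rintro rfl; exact hF (map_zero _)
  have hII : 1 / (I * (1 / I)) = 1 := one_div_eq_one_of_one_div_one_div_eq_one (hD I hI hIfg)
  have hII_ext : 1 / extendedHom K T (I * (1 / I)) = 1 :=
    IsVLinked.one_div_extendedHom_eq_one hlink mul_one_div_le_one hII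
  have hle : extendedHom K T (I * (1 / I)) ≤ extendedHom K T I * (1 / extendedHom K T I) := by
    rw [RingHom.map_mul]
    gcongr
    exact extended_one_div_le K _ I hF
  rw [one_div_eq_one_of_le hII_ext hle mul_one_div_le_one, FractionalIdeal.div_one]
end

section
/- Let D be an integral domain with quotient field K and X an indeterminate. The set N_D := {g ∈ D[X] | g ≠ 0 and (c_D(g))^v = D} is a saturated multiplicatively closed subset of D[X]. -/
open FractionalIdeal

variable {D K : Type*} [CommRing D] [IsDomain D] [Field K] [Algebra D K] [IsFractionRing D K]

variable (D) in
/-- The content ideal of a polynomial `g ∈ D[X]`. -/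
def contentIdeal (g : Polynomial D) : Ideal D := Ideal.span (Set.range g.coeff)

/-! For a nonzero integral ideal `A` the inclusion `D ⊆ A⁻¹` is automatic, so `A^v = D` means
`A⁻¹ ⊆ D`; in this form the condition visibly passes to larger ideals, to products and to
powers. Every prime containing `c(fg)` contains `c(f)` or `c(g)`, so the finitely generated ideal
`c(f) c(g)` has a power inside `c(fg)`, while `c(fg) ⊆ c(f) ∩ c(g)`. The first inclusion gives
closure under products, the second saturation. -/

theorem FractionalIdeal.one_div_le_one_div_of_le_s15 {A B : FractionalIdeal (nonZeroDivisors D) K}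
    (hA : A ≠ 0) (hAB : A ≤ B) : 1 / B ≤ 1 / A :=
  (le_div_iff_mul_le hA).2 <| (mul_le_mul_right hAB _).trans <| mul_comm B _ ▸ mul_one_div_le_one

theorem FractionalIdeal.one_div_mul_le_one {A B : FractionalIdeal (nonZeroDivisors D) K}
    (hA : 1 / A ≤ 1) (hB : 1 / B ≤ 1) : 1 / (A * B) ≤ 1 := by
  by_cases hAB : A * B = 0
  · simp [hAB]
  have hA0 : A ≠ 0 := by rintro rfl; simp at hAB
  have hB0 : B ≠ 0 := by rintro rfl; simp at hAB
  have h : 1 / (A * B) * A ≤ 1 / B :=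
    (le_div_iff_mul_le hB0).2 (by rw [mul_assoc, mul_comm]; exact mul_one_div_le_one)
  exact ((le_div_iff_mul_le hA0).2 (h.trans hB)).trans hA

theorem le_vop_of_one_div_ne_zero {A : FractionalIdeal (nonZeroDivisors D) K} (hA : 1 / A ≠ 0) :
    A ≤ vop A :=
  (le_div_iff_mul_le hA).2 mul_one_div_le_one

theorem vop_eq_one_iff {A : FractionalIdeal (nonZeroDivisors D) K} (hA0 : A ≠ 0) (hA1 : A ≤ 1) :
    vop A = 1 ↔ 1 / A ≤ 1 := by
  have one_le : 1 ≤ 1 / A := (le_div_iff_mul_le hA0).2 (by rwa [one_mul])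
  constructor
  · intro h
    have h' : 1 / (1 / A) = 1 := h
    calc 1 / A ≤ 1 / (1 / (1 / A)) := le_vop_of_one_div_ne_zero (h'.symm ▸ one_ne_zero)
      _ = 1 := by rw [h', FractionalIdeal.div_one]
  · intro h
    rw [vop, le_antisymm h one_le, FractionalIdeal.div_one]

section CoeIdeal

variable {I J : Ideal D}

theorem vop_coeIdeal_eq_one_iff :
    vop (I : FractionalIdeal (nonZeroDivisors D) K) = 1 ↔
      I ≠ ⊥ ∧ 1 / (I : FractionalIdeal (nonZeroDivisors D) K) ≤ 1 := by
  by_cases hI : I = ⊥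
  · simp [hI, vop]
  · rw [vop_eq_one_iff (coeIdeal_ne_zero.2 hI) coeIdeal_le_one]
    exact (and_iff_right hI).symm

theorem vop_coeIdeal_eq_one_of_le (hIJ : I ≤ J)
    (hI : vop (I : FractionalIdeal (nonZeroDivisors D) K) = 1) :
    vop (J : FractionalIdeal (nonZeroDivisors D) K) = 1 := by
  obtain ⟨hI0, hI1⟩ := vop_coeIdeal_eq_one_iff.1 hI
  refine vop_coeIdeal_eq_one_iff.2 ⟨fun hJ ↦ hI0 (le_bot_iff.1 (hJ ▸ hIJ)), ?_⟩
  have hIJ' := (coeIdeal_le_coeIdeal K).2 hIJ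
  exact (FractionalIdeal.one_div_le_one_div_of_le_s15 (coeIdeal_ne_zero.2 hI0) hIJ').trans hI1

theorem vop_coeIdeal_mul_eq_one (hI : vop (I : FractionalIdeal (nonZeroDivisors D) K) = 1)
    (hJ : vop (J : FractionalIdeal (nonZeroDivisors D) K) = 1) :
    vop ((I * J : Ideal D) : FractionalIdeal (nonZeroDivisors D) K) = 1 := by
  obtain ⟨hI0, hI1⟩ := vop_coeIdeal_eq_one_iff.1 hI
  obtain ⟨hJ0, hJ1⟩ := vop_coeIdeal_eq_one_iff.1 hJ
  rw [vop_coeIdeal_eq_one_iff, coeIdeal_mul]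
  exact ⟨mul_ne_zero hI0 hJ0, one_div_mul_le_one hI1 hJ1⟩

theorem vop_coeIdeal_pow_eq_one (hI : vop (I : FractionalIdeal (nonZeroDivisors D) K) = 1)
    (n : ℕ) : vop ((I ^ n : Ideal D) : FractionalIdeal (nonZeroDivisors D) K) = 1 := by
  induction n with
  | zero => simp [vop]
  | succ n ih => rw [pow_succ]; exact vop_coeIdeal_mul_eq_one ih hI

end CoeIdeal

theorem contentIdeal_eq_polynomial_contentIdeal {R : Type*} [CommRing R] (g : Polynomial R) :
    contentIdeal R g = g.contentIdeal := by
  refine le_antisymm (Ideal.span_le.2 ?_) (Ideal.span_mono fun c hc ↦ ?_)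
  · exact Set.range_subset_iff.2 g.coeff_mem_contentIdeal
  · obtain ⟨n, -, rfl⟩ := Polynomial.mem_coeffs_iff.1 hc
    exact ⟨n, rfl⟩

theorem Polynomial.exists_pow_mul_contentIdeal_le_contentIdeal_mul {R : Type*} [CommRing R]
    (f g : Polynomial R) : ∃ n, (f.contentIdeal * g.contentIdeal) ^ n ≤ (f * g).contentIdeal :=
  Ideal.exists_pow_le_of_le_radical_of_fg mul_contentIdeal_le_radical_contentIdeal_mul
    (f.contentIdeal_FG.mul g.contentIdeal_FG)

/-- The set `N_D = {g ∈ D[X] | g ≠ 0, c_D(g)^v = D}` is a saturated multiplicatively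
closed subset of `D[X]`. -/
theorem nagata_set_saturated_multiplicative :
    (1 : Polynomial D) ∈ {g : Polynomial D | g ≠ 0 ∧
        vop ((contentIdeal D g : Ideal D) : FractionalIdeal (nonZeroDivisors D) K) = 1} ∧
    (∀ a b : Polynomial D,
      a ∈ {g : Polynomial D | g ≠ 0 ∧
        vop ((contentIdeal D g : Ideal D) : FractionalIdeal (nonZeroDivisors D) K) = 1} →
      b ∈ {g : Polynomial D | g ≠ 0 ∧
        vop ((contentIdeal D g : Ideal D) : FractionalIdeal (nonZeroDivisors D) K) = 1} →
      a * b ∈ {g : Polynomial D | g ≠ 0 ∧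
        vop ((contentIdeal D g : Ideal D) : FractionalIdeal (nonZeroDivisors D) K) = 1}) ∧
    (∀ a b : Polynomial D,
      a * b ∈ {g : Polynomial D | g ≠ 0 ∧
        vop ((contentIdeal D g : Ideal D) : FractionalIdeal (nonZeroDivisors D) K) = 1} →
      a ∈ {g : Polynomial D | g ≠ 0 ∧
        vop ((contentIdeal D g : Ideal D) : FractionalIdeal (nonZeroDivisors D) K) = 1} ∧
      b ∈ {g : Polynomial D | g ≠ 0 ∧
        vop ((contentIdeal D g : Ideal D) : FractionalIdeal (nonZeroDivisors D) K) = 1}) := by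
  simp only [Set.mem_ofPred_eq, contentIdeal_eq_polynomial_contentIdeal]
  refine ⟨⟨one_ne_zero, by simp [vop]⟩, ?_, ?_⟩
  · rintro f g ⟨hf0, hf⟩ ⟨hg0, hg⟩
    obtain ⟨n, hn⟩ := f.exists_pow_mul_contentIdeal_le_contentIdeal_mul g
    exact ⟨mul_ne_zero hf0 hg0,
      vop_coeIdeal_eq_one_of_le hn (vop_coeIdeal_pow_eq_one (vop_coeIdeal_mul_eq_one hf hg) n)⟩
  · rintro f g ⟨hfg0, hfg⟩
    have of_dvd {p : Polynomial D} (hp : p ∣ f * g) :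
        vop (p.contentIdeal : FractionalIdeal (nonZeroDivisors D) K) = 1 :=
      vop_coeIdeal_eq_one_of_le (Polynomial.contentIdeal_le_contentIdeal_of_dvd hp) hfg
    exact ⟨⟨left_ne_zero_of_mul hfg0, of_dvd (dvd_mul_right f g)⟩,
      ⟨right_ne_zero_of_mul hfg0, of_dvd (dvd_mul_left g f)⟩⟩
end
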